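/- Let (x_n)_{n≥1} be a sequence of real numbers converging to a real number x, and let k > 1 be a real number. If the limit lim_{n→∞} n^k (x_n − x_{n+1}) = l exists in ℝ, then the limit lim_{n→∞} n^{k−1} (x_n − x) exists and equals l/(k−1). -/

import Mathlib

open Filter Topology

/-!
Put `b n = n ^ (1 - k)`. By the derivative of `t ↦ t ^ (1 - k)`,
`b n - b (n + 1) ~ (k - 1) n ^ (-k)`, so the ratio `(x n - x (n + 1)) / (b n - b (n + 1))` tends
to `l / (k - 1)`, and the `0/0` form of the Stolz–Cesàro theorem transfers this limit to
`(x n - X) / b n`. Stolz–Cesàro itself follows by telescoping `|Δa - L Δb| ≤ ε Δb` from `n` to `M`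
and letting `M → ∞`.
-/

theorem abs_sub_le_sub_of_forall_abs_sub_succ_le {c d : ℕ → ℝ} {n : ℕ}
    (h : ∀ m ≥ n, |c m - c (m + 1)| ≤ d m - d (m + 1)) {M : ℕ} (hM : n ≤ M) :
    |c n - c M| ≤ d n - d M := by
  induction M, hM using Nat.le_induction with
  | base => simp
  | succ M hnM ih =>
    calc |c n - c (M + 1)| = |(c n - c M) + (c M - c (M + 1))| := by ring_nf
      _ ≤ |c n - c M| + |c M - c (M + 1)| := abs_add_le _ _
      _ ≤ d n - d (M + 1) := by linarith [h M hnM]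

theorem abs_le_of_forall_abs_sub_succ_le {c d : ℕ → ℝ} {n : ℕ}
    (hc : Tendsto c atTop (𝓝 0)) (hd : Tendsto d atTop (𝓝 0))
    (h : ∀ m ≥ n, |c m - c (m + 1)| ≤ d m - d (m + 1)) :
    |c n| ≤ d n := by
  have hlim : Tendsto (fun M => d n - d M - |c n - c M|) atTop (𝓝 (d n - 0 - |c n - 0|)) :=
    (tendsto_const_nhds.sub hd).sub (tendsto_const_nhds.sub hc).abs
  have := ge_of_tendsto hlim (eventually_atTop.2 ⟨n, fun M hM =>
    sub_nonneg.2 (abs_sub_le_sub_of_forall_abs_sub_succ_le h hM)⟩)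
  simpa using this

/-- Stolz–Cesàro theorem, `0/0` form. -/
theorem tendsto_div_of_tendsto_sub_succ_div_sub_succ {a b : ℕ → ℝ} {L : ℝ}
    (ha : Tendsto a atTop (𝓝 0)) (hb : Tendsto b atTop (𝓝 0))
    (hb_anti : ∀ᶠ n in atTop, b (n + 1) < b n)
    (h : Tendsto (fun n => (a n - a (n + 1)) / (b n - b (n + 1))) atTop (𝓝 L)) :
    Tendsto (fun n => a n / b n) atTop (𝓝 L) := by
  rw [Metric.tendsto_nhds]
  intro ε hε
  obtain ⟨N, hN⟩ := eventually_atTop.1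
    (hb_anti.and (Metric.tendsto_nhds.1 h (ε / 2) (half_pos hε)))
  have hstep : ∀ m ≥ N, |(a m - b m * L) - (a (m + 1) - b (m + 1) * L)|
      ≤ ε / 2 * b m - ε / 2 * b (m + 1) := fun m hm => by
    obtain ⟨hbm, hm⟩ := hN m hm
    have hpos : 0 < b m - b (m + 1) := sub_pos.2 hbm
    rw [Real.dist_eq, div_sub' hpos.ne', abs_div, abs_of_pos hpos, div_lt_iff₀ hpos] at hm
    calc _ = |a m - a (m + 1) - (b m - b (m + 1)) * L| := by ring_nf
      _ ≤ ε / 2 * b m - ε / 2 * b (m + 1) := by linarith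
  have hbound : ∀ n ≥ N, |a n - b n * L| ≤ ε / 2 * b n := fun n hn =>
    abs_le_of_forall_abs_sub_succ_le (by simpa using ha.sub (hb.mul_const L))
      (by simpa using hb.const_mul (ε / 2)) fun m hm => hstep m (hn.trans hm)
  refine eventually_atTop.2 ⟨N, fun n hn => ?_⟩
  -- `0 ≤ b (n + 1)` is forced by `hbound` at `n + 1`.
  have hbn : 0 < b n := by
    have := (abs_nonneg _).trans (hbound (n + 1) (by omega))
    linarith [(hN n hn).1, nonneg_of_mul_nonneg_right this (half_pos hε)]
  rw [Real.dist_eq, div_sub' hbn.ne', abs_div, abs_of_pos hbn, div_lt_iff₀ hbn]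
  linarith [hbound n hn, mul_pos hε hbn]

theorem tendsto_rpow_one_sub_mul_rpow_succ_sub_rpow (p : ℝ) :
    Tendsto (fun n : ℕ => (n : ℝ) ^ (1 - p) * (((n : ℝ) + 1) ^ p - (n : ℝ) ^ p)) atTop (𝓝 p) := by
  have hderiv := (Real.hasDerivAt_rpow_const (x := 1) (p := p)
    (Or.inl one_ne_zero)).tendsto_slope_zero_right
  simp only [Real.one_rpow, mul_one, smul_eq_mul] at hderiv
  refine (hderiv.comp (tendsto_inv_atTop_nhdsGT_zero.comp tendsto_natCast_atTop_atTop)).congr'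
    (eventually_atTop.2 ⟨1, fun n hn => ?_⟩)
  have hn : (0 : ℝ) < n := by exact_mod_cast hn
  have hsucc : (n : ℝ) + 1 = n * (1 + (n : ℝ)⁻¹) := by field_simp
  have hpow : (n : ℝ) ^ (1 - p) * (n : ℝ) ^ p = n := by
    rw [← Real.rpow_add hn, sub_add_cancel, Real.rpow_one]
  simp only [Function.comp_apply, inv_inv]
  rw [hsucc, Real.mul_rpow hn.le (by positivity), ← mul_sub_one, ← mul_assoc, hpow]

theorem cesaro_stolz_rate (x : ℕ → ℝ) (X : ℝ) (k : ℝ) (hk : 1 < k) (l : ℝ)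
    (hx : Tendsto x atTop (𝓝 X))
    (hl : Tendsto (fun n : ℕ => (n : ℝ) ^ k * (x n - x (n + 1))) atTop (𝓝 l)) :
    Tendsto (fun n : ℕ => (n : ℝ) ^ (k - 1) * (x n - X)) atTop (𝓝 (l / (k - 1))) := by
  have hpow : Tendsto (fun n : ℕ => (n : ℝ) ^ (1 - k)) atTop (𝓝 0) := by
    simpa only [neg_sub, Function.comp_def] using
      (tendsto_rpow_neg_atTop (sub_pos.2 hk)).comp tendsto_natCast_atTop_atTop
  have hpow_anti : ∀ᶠ n : ℕ in atTop, ((n + 1 : ℕ) : ℝ) ^ (1 - k) < (n : ℝ) ^ (1 - k) :=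
    eventually_atTop.2 ⟨1, fun n hn => Real.rpow_lt_rpow_of_neg (by exact_mod_cast hn)
      (by push_cast; linarith) (by linarith)⟩
  have hdiff : Tendsto (fun n : ℕ => (n : ℝ) ^ k * ((n : ℝ) ^ (1 - k) - ((n : ℝ) + 1) ^ (1 - k)))
      atTop (𝓝 (k - 1)) := by
    simpa only [sub_sub_cancel, ← mul_neg, neg_sub] using
      (tendsto_rpow_one_sub_mul_rpow_succ_sub_rpow (1 - k)).neg
  have hstolz := tendsto_div_of_tendsto_sub_succ_div_sub_succ (a := fun n => x n - X)
    (L := l / (k - 1)) (tendsto_sub_nhds_zero_iff.2 hx) hpow hpow_anti <|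
    (hl.div hdiff (sub_pos.2 hk).ne').congr' <| eventually_atTop.2 ⟨1, fun n hn => by
      have hn : (0 : ℝ) < n := by exact_mod_cast hn
      push_cast
      rw [Pi.div_apply, sub_sub_sub_cancel_right,
        mul_div_mul_left _ _ (Real.rpow_pos_of_pos hn k).ne']⟩
  refine hstolz.congr fun n => ?_
  rw [← neg_sub k, Real.rpow_neg (Nat.cast_nonneg n), div_inv_eq_mul, mul_comm]
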